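/- Let K be a positive integer and m a real with 4eK ≤ m < 2^K / K. Let C_2, ..., C_{K+1} be reals with 0 < C_k ≤ 1/2. Then e/(Km) > ∏_{k=2}^{K+1}(C_k + 2e/m). -/
import Mathlib


theorem stmt_12 (K : ℕ) (hK : 1 ≤ K) (m : ℝ)
    (hm : 4 * Real.exp 1 * K ≤ m) (hm' : m < 2 ^ K / K)
    (C : ℕ → ℝ) (hC : ∀ k ∈ Finset.Icc 2 (K + 1), 0 < C k ∧ C k ≤ 1 / 2) :
    Real.exp 1 / (K * m) > ∏ k ∈ Finset.Icc 2 (K + 1), (C k + 2 * Real.exp 1 / m) := by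
  have hK0 : (0:ℝ) < K := by exact_mod_cast hK
  have he : (0:ℝ) < Real.exp 1 := Real.exp_pos 1
  have hm0 : (0:ℝ) < m := lt_of_lt_of_le (by positivity) hm
  set B : ℝ := 1/2 + 1/(2*K) with hB
  have hbound : ∀ k ∈ Finset.Icc 2 (K+1), C k + 2 * Real.exp 1 / m ≤ B := by
    intro k hk
    have h1 := (hC k hk).2
    have h2 : 2 * Real.exp 1 / m ≤ 1/(2*K) := by
      rw [div_le_div_iff₀ hm0 (by positivity)]
      nlinarith
    simp only [hB]; linarith
  have hprod : ∏ k ∈ Finset.Icc 2 (K+1), (C k + 2*Real.exp 1/m) ≤ B ^ K := by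
    have h := Finset.prod_le_prod (s := Finset.Icc 2 (K+1))
      (f := fun k => C k + 2*Real.exp 1/m) (g := fun _ => B)
      (fun k hk => by have := (hC k hk).1; positivity) hbound
    simpa [Finset.prod_const, Nat.card_Icc] using h
  have hBe : B ^ K ≤ Real.exp 1 / 2 ^ K := by
    have h1 : B = (1 + 1/(K:ℝ))/2 := by rw [hB]; field_simp
    have h2 : (1 + 1/(K:ℝ)) ≤ Real.exp (1/K) := by
      have := Real.add_one_le_exp (1/(K:ℝ)); linarith
    calc B ^ K = (1 + 1/(K:ℝ))^K / 2^K := by rw [h1, div_pow]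
      _ ≤ Real.exp (1/K) ^ K / 2^K := by gcongr
      _ = Real.exp 1 / 2 ^ K := by
          rw [← Real.exp_nat_mul]
          congr 1
          field_simp
  have hKm : (K:ℝ) * m < 2 ^ K := by
    have := (lt_div_iff₀ hK0).mp hm'
    linarith [this]
  have hfin : Real.exp 1 / 2 ^ K < Real.exp 1 / ((K:ℝ) * m) :=
    div_lt_div_of_pos_left he (by positivity) hKm
  calc ∏ k ∈ Finset.Icc 2 (K+1), (C k + 2*Real.exp 1/m) ≤ B ^ K := hprod
    _ ≤ Real.exp 1 / 2 ^ K := hBe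
    _ < Real.exp 1 / ((K:ℝ) * m) := hfin
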